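/- arXiv:2208.13758 — 2 statements merged into one kernel-verified Lean document; each statement's English description precedes it below -/
import Mathlib

section
/- In a 1-truss, the underlying order ≤ is determined by the frame order ⪯ and the dimension map: the covering relations of the total order ⪯ alternate between objects of dimension 0 and dimension 1, and for adjacent elements t ⪯ s, exactly one of t < s or s < t holds, namely the one decreasing dimension. -/
/-- `a` and `b` form a covering pair of the relation `fle`:
`a ⪯ b`, `a ≠ b`, and no element lies strictly between them. -/
def FrameCovers {α : Type*} (fle : α → α → Prop) (a b : α) : Prop :=
  fle a b ∧ a ≠ b ∧ ∀ c, fle a c → fle c b → c = a ∨ c = b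

/-- A combinatorial 1-truss: a finite poset `(α, le)` with a full and conservative
dimension functor to `[1]ᵒᵖ` (encoded via `Fin 2`), and a total frame order `fle`
whose covering pairs are comparable in `le`. -/
structure OneTruss (α : Type*) [Fintype α] where
  /-- the underlying partial order -/
  le : α → α → Prop
  le_refl : ∀ a, le a a
  le_trans : ∀ a b c, le a b → le b c → le a c
  le_antisymm : ∀ a b, le a b → le b a → a = b
  /-- the dimension map, a functor to `[1]ᵒᵖ` -/
  dim : α → Fin 2
  /-- `dim` is monotone as a functor to `[1]ᵒᵖ`: an arrow `a → b` maps to an arrow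
  `dim a → dim b` of `[1]ᵒᵖ`, i.e. `dim b ≤ dim a` in `[1]`. -/
  dim_mono : ∀ a b, le a b → dim b ≤ dim a
  /-- `dim` is full: every non-identity arrow surjects onto the arrow `1 → 0` of `[1]ᵒᵖ` -/
  dim_full : ∀ a b, le a b → a ≠ b → dim a = 1 ∧ dim b = 0
  /-- `dim` is conservative: it reflects identities -/
  dim_conservative : ∀ a b, le a b → dim a = dim b → a = b
  /-- the frame order `⪯` -/
  fle : α → α → Prop
  fle_refl : ∀ a, fle a a
  fle_trans : ∀ a b c, fle a b → fle b c → fle a c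
  fle_antisymm : ∀ a b, fle a b → fle b a → a = b
  /-- the frame order is total -/
  fle_total : ∀ a b, fle a b ∨ fle b a
  /-- covering pairs `t ⪯ s` of the frame order satisfy `t < s` or `s < t` in `le` -/
  covers_comparable : ∀ a b, FrameCovers fle a b → le a b ∨ le b a

/-- The dual 1-truss `T† = (T, ≤ᵒᵖ, dimᵒᵖ, ⪯)`. -/
def OneTruss.dual {α : Type*} [Fintype α] (T : OneTruss α) : OneTruss α where
  le a b := T.le b a
  le_refl a := T.le_refl a
  le_trans a b c h1 h2 := T.le_trans c b a h2 h1
  le_antisymm a b h1 h2 := T.le_antisymm a b h2 h1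
  dim a := ⟨1 - (T.dim a).val, by omega⟩
  dim_mono a b h := by
    have h' := T.dim_mono b a h
    simp only [Fin.le_def] at h' ⊢
    omega
  dim_full a b h hne := by
    obtain ⟨h1, h2⟩ := T.dim_full b a h (fun e => hne e.symm)
    refine ⟨Fin.ext ?_, Fin.ext ?_⟩ <;> simp [h1, h2]
  dim_conservative a b h hd := by
    have hv : 1 - (T.dim a).val = 1 - (T.dim b).val := congrArg Fin.val hd
    have ha := (T.dim a).isLt
    have hb := (T.dim b).isLt
    exact (T.dim_conservative b a h (Fin.ext (by omega))).symm
  fle := T.fle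
  fle_refl := T.fle_refl
  fle_trans := T.fle_trans
  fle_antisymm := T.fle_antisymm
  fle_total := T.fle_total
  covers_comparable a b hc := (T.covers_comparable a b hc).symm

/-- In a 1-truss, the underlying order `≤` is determined by the frame order and the
dimension map: covering pairs of the frame order have distinct (alternating)
dimensions, and for frame-adjacent `t ⪯ s`, we have `t < s` in `≤` precisely if
`dim t = 1` and `dim s = 0` (arrows go from dimension-1 objects to adjacent
dimension-0 objects). -/
theorem oneTruss_le_determined_by_frame_and_dim {α : Type*} [Fintype α]
    (T : OneTruss α) (t s : α) (h : FrameCovers T.fle t s) :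
    T.dim t ≠ T.dim s ∧
    ((T.le t s ∧ t ≠ s) ↔ (T.dim t = 1 ∧ T.dim s = 0)) := by
  obtain ⟨hfle, hne, _⟩ := h
  rcases T.covers_comparable t s ⟨hfle, hne, ‹_›⟩ with hle | hle
  · obtain ⟨h1, h0⟩ := T.dim_full t s hle hne
    exact ⟨by rw [h1, h0]; decide, ⟨fun _ => ⟨h1, h0⟩, fun _ => ⟨hle, hne⟩⟩⟩
  · obtain ⟨h1, h0⟩ := T.dim_full s t hle (fun e => hne e.symm)
    refine ⟨by rw [h1, h0]; decide, ⟨fun ⟨hts, hne'⟩ => ?_, fun ⟨ht, _⟩ => ?_⟩⟩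
    · exact absurd ((T.dim_full t s hts hne').1) (by rw [h0]; decide)
    · exact absurd ht (by rw [h0]; decide)
end

section
/- In an n-truss, the cell dimension map is monotone: for an n-truss given by a tower of 1-truss bundles q_i : T_i → T_{i−1}, the map dim : T_n → [n]ᵒᵖ defined by dim(x) = Σᵢ dimᵢ(x) (where dimᵢ(x) is the fiberwise 1-truss dimension of the image of x in T_i) is a monotone map of posets. -/
/-- A tower of 1-truss bundles (the data of an `n`-truss, for every level `n`): posets
`T i` with monotone bundle maps `q i : T (i+1) → T i`, where each element of `T (i+1)`
carries a fiberwise 1-truss dimension in `{0,1}`. The fiberwise dimension is monotone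
along arrows within a fiber (1-truss condition), and along arrows over non-identity base
arrows condition (A) of 1-truss bordisms holds: fiber-dimension-0 elements lift to
fiber-dimension-0 elements. -/
structure TrussTower where
  T : ℕ → Type
  le : ∀ i, T i → T i → Prop
  le_refl : ∀ i a, le i a a
  le_trans : ∀ i a b c, le i a b → le i b c → le i a c
  le_antisymm : ∀ i a b, le i a b → le i b a → a = b
  q : ∀ i, T (i + 1) → T i
  q_mono : ∀ i x y, le (i + 1) x y → le i (q i x) (q i y)
  fibdim : ∀ i, T (i + 1) → Fin 2
  fibdim_fiber_mono : ∀ i x y, le (i + 1) x y → q i x = q i y → fibdim i y ≤ fibdim i x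
  fibdim_bordismA : ∀ i x y, le (i + 1) x y → q i x ≠ q i y →
    fibdim i x = 0 → fibdim i y = 0

/-- The cell dimension `dim x = Σᵢ dimᵢ x` of an element of level `j` of a truss tower:
the sum of the fiberwise 1-truss dimensions of its images at all levels. -/
def TrussTower.cellDim (W : TrussTower) : ∀ j, W.T j → ℕ
  | 0, _ => 0
  | (j + 1), x => W.cellDim j (W.q j x) + (W.fibdim j x).val

/-- In an `n`-truss, the cell dimension map is a monotone map `dim : T_n → [n]ᵒᵖ`:
it takes values in `{0, ..., n}` and reverses the order (`x ≤ y` implies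
`dim y ≤ dim x`). -/
theorem cellDim_monotone (W : TrussTower) (n : ℕ) :
    (∀ x : W.T n, W.cellDim n x ≤ n) ∧
    (∀ x y : W.T n, W.le n x y → W.cellDim n y ≤ W.cellDim n x) := by
  induction n with
  | zero => exact ⟨fun x => le_refl 0, fun x y _ => le_refl _⟩
  | succ n ih =>
    obtain ⟨hbd, hmono⟩ := ih
    constructor
    · intro x
      have h1 : (W.fibdim n x).val ≤ 1 := Nat.lt_succ_iff.mp (W.fibdim n x).isLt
      have := hbd (W.q n x)
      simp only [TrussTower.cellDim]
      omega
    · intro x y hxy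
      simp only [TrussTower.cellDim]
      have hq : W.cellDim n (W.q n y) ≤ W.cellDim n (W.q n x) :=
        hmono _ _ (W.q_mono n x y hxy)
      by_cases hx : W.fibdim n x = 0
      · by_cases heq : W.q n x = W.q n y
        · have hf : W.fibdim n y ≤ W.fibdim n x := W.fibdim_fiber_mono n x y hxy heq
          have : W.cellDim n (W.q n y) = W.cellDim n (W.q n x) := by rw [heq]
          have hf' : (W.fibdim n y).val ≤ (W.fibdim n x).val := hf
          omega
        · have hy := W.fibdim_bordismA n x y hxy heq hx
          rw [hx, hy]
          omega
      · have hx1 : (W.fibdim n x).val = 1 := by omega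
        have hy1 : (W.fibdim n y).val ≤ 1 := Nat.lt_succ_iff.mp (W.fibdim n y).isLt
        omega
end
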